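/- Let r ∈ [0, 1) and for each i ∈ ℕ define real numbers N_{i,t} by N_{i,0} = 0 and, for t ≥ 1, N_{i,t} = r N_{i,t-1} + 1/t if i < t and N_{i,t} = r N_{i,t-1} otherwise. Then for all integers i, t with 1 ≤ i < t and t ≤ 2/(1−r), one has N_{i,t} ≤ log(2/(i(1−r))). -/

import Mathlib

/-!
Since `0 ≤ r ≤ 1` and the coefficients are nonnegative, dropping the damping factor `r` only
increases them, so `N i t` is at most the harmonic tail `∑_{s=i+1}^{t} 1/s ≤ log (t/i)`.
-/

open Real

theorem inv_add_one_le_log_add_one_sub_log {x : ℝ} (hx : 0 < x) :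
    (x + 1)⁻¹ ≤ log (x + 1) - log x := by
  have h := one_sub_inv_le_log_of_pos (x := (x + 1) / x) (by positivity)
  rw [log_div (by positivity) hx.ne', inv_div] at h
  have hsub : 1 - x / (x + 1) = (x + 1)⁻¹ := by field_simp; ring
  linarith

section NoiseCoeff

variable {r : ℝ} {N : ℕ → ℕ → ℝ}

theorem noiseCoeff_nonneg (hr0 : 0 ≤ r) (hN0 : ∀ i, N i 0 = 0)
    (hN : ∀ i t : ℕ, 1 ≤ t → N i t =
      if i < t then r * N i (t - 1) + 1 / (t : ℝ) else r * N i (t - 1))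
    (i t : ℕ) : 0 ≤ N i t := by
  induction t with
  | zero => rw [hN0]
  | succ t ih =>
    rw [hN i (t + 1) (Nat.le_add_left 1 t)]
    split <;> positivity

theorem noiseCoeff_eq_zero_of_le (hN0 : ∀ i, N i 0 = 0)
    (hN : ∀ i t : ℕ, 1 ≤ t → N i t =
      if i < t then r * N i (t - 1) + 1 / (t : ℝ) else r * N i (t - 1))
    {i t : ℕ} (ht : t ≤ i) : N i t = 0 := by
  induction t with
  | zero => exact hN0 i
  | succ t ih =>
    rw [hN i (t + 1) (Nat.le_add_left 1 t), if_neg (by omega), Nat.add_sub_cancel,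
      ih (by omega), mul_zero]

theorem noiseCoeff_le_log_sub_log (hr0 : 0 ≤ r) (hr1 : r ≤ 1) (hN0 : ∀ i, N i 0 = 0)
    (hN : ∀ i t : ℕ, 1 ≤ t → N i t =
      if i < t then r * N i (t - 1) + 1 / (t : ℝ) else r * N i (t - 1))
    {i t : ℕ} (hi : 1 ≤ i) (hit : i ≤ t) : N i t ≤ log t - log i := by
  induction t, hit using Nat.le_induction with
  | base => simp [noiseCoeff_eq_zero_of_le hN0 hN le_rfl]
  | succ t hit ih =>
    have hdamp : r * N i t ≤ N i t :=
      mul_le_of_le_one_left (noiseCoeff_nonneg hr0 hN0 hN i t) hr1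
    have hharm := inv_add_one_le_log_add_one_sub_log (x := t) (by norm_cast; omega)
    rw [hN i (t + 1) (Nat.le_add_left 1 t), if_pos (by omega), Nat.add_sub_cancel, one_div]
    push_cast
    linarith

end NoiseCoeff

/-- **Constant bound on the IGT scalar noise coefficients.** For `r ∈ [0,1)` and the recursion
`N i 0 = 0`, `N i t = r N i (t-1) + 1/t` if `i < t` and `N i t = r N i (t-1)` otherwise:
for all integers `1 ≤ i < t` with `t ≤ 2/(1-r)`, one has `N i t ≤ log (2/(i (1-r)))`. -/
theorem igt_noise_coeff_constant_bound
    (r : ℝ) (hr0 : 0 ≤ r) (hr1 : r < 1)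
    (N : ℕ → ℕ → ℝ)
    (hN0 : ∀ i, N i 0 = 0)
    (hN : ∀ i t : ℕ, 1 ≤ t → N i t =
      if i < t then r * N i (t - 1) + 1 / (t : ℝ) else r * N i (t - 1)) :
    ∀ i t : ℕ, 1 ≤ i → i < t → (t : ℝ) ≤ 2 / (1 - r) →
      N i t ≤ Real.log (2 / ((i : ℝ) * (1 - r))) := by
  intro i t hi hit ht
  have hi₀ : (0 : ℝ) < i := by exact_mod_cast hi
  have ht₀ : (0 : ℝ) < t := by exact_mod_cast Nat.zero_lt_of_lt hit
  calc N i t ≤ log t - log i := noiseCoeff_le_log_sub_log hr0 hr1.le hN0 hN hi hit.le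
    _ = log (t / i) := (log_div ht₀.ne' hi₀.ne').symm
    _ ≤ log (2 / (i * (1 - r))) := by
      rw [mul_comm, ← div_div]
      gcongr
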